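/- Let X = sin(2πfU + φ₁) and Y = sin(2πfU + φ₂) where U is uniform on {0,…,n−1} and f = 1/n with n ≥ 3. If φ₁ − φ₂ is not congruent to π/2 modulo π, then X and Y are not independent (indeed they are correlated). -/

import Mathlib

/-!
For `n ∤ m` the points `exp (2πi m u / n)`, `u < n`, are the powers of a root of unity `≠ 1`,
so they sum to zero. With `m = 1` this makes `X` and `Y` centred; with `m = 2` and
`2 sin a sin b = cos (a - b) - cos (a + b)` it gives `E[XY] = cos (φ₁ - φ₂) / 2`, which needs
`n ≥ 3`. Hence the covariance is `cos (φ₁ - φ₂) / 2 ≠ 0`, while independent variables are uncorrelated.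
-/

open MeasureTheory Real ProbabilityTheory

open Finset in
theorem PMF.integral_uniformOfFinset {α E : Type*} [MeasurableSpace α]
    [MeasurableSingletonClass α] [NormedAddCommGroup E] [NormedSpace ℝ E] [CompleteSpace E]
    (s : Finset α) (hs : s.Nonempty) (f : α → E) :
    ∫ a, f a ∂(uniformOfFinset s hs).toMeasure = (#s : ℝ)⁻¹ • ∑ a ∈ s, f a := by
  rw [← restrict_toMeasure_support, support_uniformOfFinset,
    setIntegral_finset _ (IntegrableOn.finset (f := f)), Finset.smul_sum]
  refine Finset.sum_congr rfl fun a ha => ?_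
  rw [measureReal_def, toMeasure_apply_singleton _ _ (MeasurableSet.singleton a),
    uniformOfFinset_apply_of_mem hs ha]
  simp

theorem Complex.sum_range_exp_two_pi_mul_div_eq_zero {n m : ℕ} (hm : ¬ n ∣ m) (θ : ℝ) :
    ∑ u ∈ Finset.range n, exp (↑(2 * π * (m / n) * u + θ) * I) = 0 := by
  rcases Nat.eq_zero_or_pos n with rfl | hn
  · simp
  set ζ := exp (2 * π * I / n)
  have hζ : IsPrimitiveRoot ζ n := isPrimitiveRoot_exp n hn.ne'
  have hζm : ζ ^ m ≠ 1 := by rwa [Ne, hζ.pow_eq_one_iff_dvd]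
  have hterm (u : ℕ) : exp (↑(2 * π * (m / n) * u + θ) * I) = exp (θ * I) * (ζ ^ m) ^ u := by
    rw [← exp_nat_mul, ← exp_nat_mul, ← exp_add]
    congr 1
    push_cast
    field_simp
    ring
  simp_rw [hterm, ← Finset.mul_sum, geom_sum_eq hζm, ← pow_mul, mul_comm m, pow_mul,
    hζ.pow_eq_one, one_pow, sub_self, zero_div, mul_zero]

theorem Real.sum_range_cos_two_pi_mul_div_eq_zero {n m : ℕ} (hm : ¬ n ∣ m) (θ : ℝ) :
    ∑ u ∈ Finset.range n, cos (2 * π * (m / n) * u + θ) = 0 := by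
  have h := congrArg Complex.re (Complex.sum_range_exp_two_pi_mul_div_eq_zero hm θ)
  rw [Complex.re_sum, Complex.zero_re] at h
  simpa only [Complex.exp_ofReal_mul_I_re] using h

theorem Real.sum_range_sin_two_pi_mul_div_eq_zero {n m : ℕ} (hm : ¬ n ∣ m) (θ : ℝ) :
    ∑ u ∈ Finset.range n, sin (2 * π * (m / n) * u + θ) = 0 := by
  have h := congrArg Complex.im (Complex.sum_range_exp_two_pi_mul_div_eq_zero hm θ)
  rw [Complex.im_sum, Complex.zero_im] at h
  simpa only [Complex.exp_ofReal_mul_I_im] using h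

section UniformPhase

variable (n : ℕ) (hne : (Finset.range n).Nonempty)

theorem integral_sin_two_pi_div_uniformOfFinset_range (hn : 2 ≤ n) (φ : ℝ) :
    ∫ u, sin (2 * π * (1 / n) * u + φ) ∂(PMF.uniformOfFinset (Finset.range n) hne).toMeasure
      = 0 := by
  have h := sum_range_sin_two_pi_mul_div_eq_zero (n := n) (m := 1)
    (Nat.not_dvd_of_pos_of_lt one_pos hn) φ
  rw [Nat.cast_one] at h
  rw [PMF.integral_uniformOfFinset, h, smul_zero]

theorem integral_sin_mul_sin_two_pi_div_uniformOfFinset_range (hn : 3 ≤ n) (φ₁ φ₂ : ℝ) :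
    ∫ u, sin (2 * π * (1 / n) * u + φ₁) * sin (2 * π * (1 / n) * u + φ₂)
        ∂(PMF.uniformOfFinset (Finset.range n) hne).toMeasure = cos (φ₁ - φ₂) / 2 := by
  have hterm (u : ℕ) : sin (2 * π * (1 / n) * u + φ₁) * sin (2 * π * (1 / n) * u + φ₂)
      = cos (φ₁ - φ₂) / 2 - cos (2 * π * ((2 : ℕ) / n) * u + (φ₁ + φ₂)) / 2 := by
    have h := two_mul_sin_mul_sin (2 * π * (1 / n) * u + φ₁) (2 * π * (1 / n) * u + φ₂)
    rw [show 2 * π * (1 / n) * u + φ₁ + (2 * π * (1 / n) * u + φ₂)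
        = 2 * π * ((2 : ℕ) / n) * u + (φ₁ + φ₂) by push_cast; ring, add_sub_add_left_eq_sub] at h
    linarith
  have hdiv : ¬ n ∣ 2 := Nat.not_dvd_of_pos_of_lt two_pos (by omega)
  simp_rw [PMF.integral_uniformOfFinset, hterm, Finset.sum_sub_distrib, ← Finset.sum_div,
    sum_range_cos_two_pi_mul_div_eq_zero hdiv, Finset.sum_const, Finset.card_range, nsmul_eq_mul,
    zero_div, sub_zero, smul_eq_mul]
  field_simp

end UniformPhase

/-- Let `U` be uniform on `{0, …, n-1}`, `f = 1/n` with `n ≥ 3`, `X = sin (2πfU + φ₁)` and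
`Y = sin (2πfU + φ₂)`. If `φ₁ - φ₂` is not congruent to `π/2` modulo `π`, then `X` and `Y` are
correlated (nonzero covariance), and in particular not independent. -/
theorem sin_sin_uniform_not_indep (n : ℕ) (hn : 3 ≤ n) (φ₁ φ₂ : ℝ)
    (hne : (Finset.range n).Nonempty)
    (hφ : ¬ ∃ k : ℤ, φ₁ - φ₂ = π / 2 + k * π) :
    (∫ u, Real.sin (2 * π * (1 / n) * u + φ₁) * Real.sin (2 * π * (1 / n) * u + φ₂)
        ∂((PMF.uniformOfFinset (Finset.range n) hne).toMeasure) -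
      (∫ u, Real.sin (2 * π * (1 / n) * u + φ₁)
        ∂((PMF.uniformOfFinset (Finset.range n) hne).toMeasure)) *
      (∫ u, Real.sin (2 * π * (1 / n) * u + φ₂)
        ∂((PMF.uniformOfFinset (Finset.range n) hne).toMeasure)) ≠ 0) ∧
    ¬ IndepFun (fun u : ℕ => Real.sin (2 * π * (1 / n) * u + φ₁))
        (fun u : ℕ => Real.sin (2 * π * (1 / n) * u + φ₂))
        ((PMF.uniformOfFinset (Finset.range n) hne).toMeasure) := by
  have hcos : cos (φ₁ - φ₂) ≠ 0 := fun h => hφ <| by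
    obtain ⟨k, hk⟩ := cos_eq_zero_iff.mp h
    exact ⟨k, by rw [hk]; ring⟩
  refine (fun hcov => ⟨hcov, fun hindep => hcov ?_⟩) ?_
  · rw [integral_sin_mul_sin_two_pi_div_uniformOfFinset_range n hne hn,
      integral_sin_two_pi_div_uniformOfFinset_range n hne (by omega), zero_mul, sub_zero]
    exact div_ne_zero hcos two_ne_zero
  · rw [hindep.integral_fun_mul_eq_mul_integral (measurable_of_countable _).aestronglyMeasurable
      (measurable_of_countable _).aestronglyMeasurable, sub_self]
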